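/- arXiv:1304.1246 — 2 statements merged into one kernel-verified Lean document; each statement's English description precedes it below -/
import Mathlib

section
/- Let G be a group acting by isometries on a δ-hyperbolic geodesic metric space (S,d). Suppose that for some g, h ∈ G there exist points x, y ∈ S and a constant C > 0 such that max{d(x,gx), d(y,hy)} ≤ C and min{d(x,hx), d(y,gy)} ≥ d(x,y) + 2C + 18δ + 1. Then the element gh is loxodromic, i.e., there exists c > 0 such that d(x, (gh)^n x) ≥ c·n for all n ∈ ℕ (in fact d(x,(gh)^n x) ≥ n). -/
open Bornology

/-- A geodesic segment from `x` to `y`, parametrized by arc length on `[0, dist x y]`. -/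
def IsGeodesicSeg {S : Type*} [MetricSpace S] (f : ℝ → S) (x y : S) : Prop :=
  f 0 = x ∧ f (dist x y) = y ∧
    ∀ s ∈ Set.Icc (0:ℝ) (dist x y), ∀ t ∈ Set.Icc (0:ℝ) (dist x y),
      dist (f s) (f t) = |s - t|

/-- A metric space is geodesic if any two points are joined by a geodesic segment. -/
def GeodesicMetricSpace (S : Type*) [MetricSpace S] : Prop :=
  ∀ x y : S, ∃ f : ℝ → S, IsGeodesicSeg f x y

/-- Rips condition: every side of a geodesic triangle lies in the union of the
δ-neighbourhoods of the other two sides. -/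
def RipsHyperbolic (S : Type*) [MetricSpace S] (δ : ℝ) : Prop :=
  ∀ (x y z : S) (f g h : ℝ → S), IsGeodesicSeg f x y → IsGeodesicSeg g y z →
    IsGeodesicSeg h x z →
    ∀ s ∈ Set.Icc (0:ℝ) (dist x y),
      (∃ t ∈ Set.Icc (0:ℝ) (dist y z), dist (f s) (g t) ≤ δ) ∨
      (∃ t ∈ Set.Icc (0:ℝ) (dist x z), dist (f s) (h t) ≤ δ)

/-- The Gromov product `(x,y)_t`. -/
noncomputable def gromov {S : Type*} [MetricSpace S] (x y t : S) : ℝ :=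
  (dist x t + dist y t - dist x y) / 2

/-- Acylindricity of an isometric action of `G` on `S`. -/
def AcylindricalAction (G S : Type*) [Group G] [MetricSpace S] [MulAction G S] : Prop :=
  ∀ ε : ℝ, 0 < ε → ∃ R : ℝ, ∃ N : ℕ, 0 < R ∧
    ∀ x y : S, dist x y ≥ R →
      {g : G | dist x (g • x) ≤ ε ∧ dist y (g • y) ≤ ε}.Finite ∧
      {g : G | dist x (g • x) ≤ ε ∧ dist y (g • y) ≤ ε}.ncard ≤ N

/-- `g` is loxodromic: some orbit map `n ↦ gⁿ • s` is a quasi-isometric embedding of ℤ. -/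
def Loxodromic {G S : Type*} [Group G] [MetricSpace S] [MulAction G S] (g : G) : Prop :=
  ∃ s : S, ∃ lam C : ℝ, 1 ≤ lam ∧ 0 ≤ C ∧ ∀ m n : ℤ,
    lam⁻¹ * |(m : ℝ) - (n : ℝ)| - C ≤ dist ((g ^ m) • s) ((g ^ n) • s) ∧
    dist ((g ^ m) • s) ((g ^ n) • s) ≤ lam * |(m : ℝ) - (n : ℝ)| + C

/-!
The hyperbolicity of `S` is used through the four-point inequality
`(a, c)_w ≥ min ((a, b)_w, (b, c)_w) - 3δ` for Gromov products, which follows from the Rips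
condition. Two applications of it turn the ping-pong hypotheses on `g` and `h` into a bound on
`((gh)⁻¹x, (gh)x)_x` that is small compared with the displacement `d(x, (gh)x)`. The orbit of `x`
under `gh` is then a sequence with long steps and small Gromov products at consecutive triples,
and the four-point inequality propagates the local bound to `(x, (gh)^(n+1)x)_{(gh)^n x}`, so each
step adds at least `18δ + 2` to the distance from `x`.
-/

open Set Metric

section GromovProduct

variable {S : Type*} [MetricSpace S]

lemma gromov_comm (x y t : S) : gromov x y t = gromov y x t := by
  unfold gromov; rw [dist_comm x y]; ring

lemma gromov_nonneg (x y t : S) : 0 ≤ gromov x y t := by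
  unfold gromov; linarith [dist_triangle x t y, dist_comm y t]

lemma gromov_self_left (x y : S) : gromov x y x = 0 := by
  simp [gromov, dist_comm]

lemma dist_eq_dist_add_dist_sub_gromov (a b c : S) :
    dist a c = dist a b + dist b c - 2 * gromov a c b := by
  unfold gromov; rw [dist_comm b c]; ring

lemma gromov_smul {M : Type*} [SMul M S] [IsIsometricSMul M S] (c : M) (a b w : S) :
    gromov (c • a) (c • b) (c • w) = gromov a b w := by
  simp only [gromov, dist_smul]

lemma gromov_le_dist_of_dist_add_dist_eq {a b q : S} (hq : dist a q + dist q b = dist a b)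
    (w : S) : gromov a b w ≤ dist w q := by
  unfold gromov
  linarith [dist_triangle a q w, dist_triangle b q w, dist_comm q w, dist_comm b q]

end GromovProduct

namespace IsGeodesicSeg

variable {S : Type*} [MetricSpace S] {f : ℝ → S} {a b : S}

lemma dist_left (hf : IsGeodesicSeg f a b) {t : ℝ} (ht : t ∈ Icc 0 (dist a b)) :
    dist a (f t) = t := by
  rw [← hf.1, hf.2.2 0 (left_mem_Icc.2 dist_nonneg) t ht, zero_sub, abs_neg, abs_of_nonneg ht.1]

lemma dist_add_dist (hf : IsGeodesicSeg f a b) {t : ℝ} (ht : t ∈ Icc 0 (dist a b)) :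
    dist a (f t) + dist (f t) b = dist a b := by
  have h := hf.2.2 t ht _ (right_mem_Icc.2 dist_nonneg)
  rw [hf.2.1] at h
  rw [hf.dist_left ht, h, abs_of_nonpos (by linarith [ht.2])]
  ring

lemma continuousOn (hf : IsGeodesicSeg f a b) : ContinuousOn f (Icc 0 (dist a b)) :=
  (LipschitzOnWith.of_dist_le_mul fun s hs t ht => by
    rw [hf.2.2 s hs t ht, NNReal.coe_one, one_mul, Real.dist_eq]).continuousOn

lemma isConnected_image (hf : IsGeodesicSeg f a b) : IsConnected (f '' Icc 0 (dist a b)) :=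
  (isConnected_Icc dist_nonneg).image f hf.continuousOn

lemma isCompact_image (hf : IsGeodesicSeg f a b) : IsCompact (f '' Icc 0 (dist a b)) :=
  isCompact_Icc.image_of_continuousOn hf.continuousOn

end IsGeodesicSeg

/-- Gromov's four-point condition with constant `D`. -/
def GromovProductHyperbolic (S : Type*) [MetricSpace S] (D : ℝ) : Prop :=
  ∀ w a b c : S, min (gromov a b w) (gromov b c w) - D ≤ gromov a c w

namespace RipsHyperbolic

variable {S : Type*} [MetricSpace S] {δ : ℝ}

/-- The side `[x, z]` is covered by the closed `δ`-neighbourhoods of `[x, w]` and `[z, w]`; as it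
is connected and meets both, it meets their intersection. -/
lemma exists_near_both_sides (hhyp : RipsHyperbolic S δ) (hδ : 0 ≤ δ) {x z w : S}
    {f g h : ℝ → S} (hf : IsGeodesicSeg f x z) (hg : IsGeodesicSeg g z w)
    (hh : IsGeodesicSeg h x w) :
    ∃ s ∈ Icc 0 (dist x z), (∃ p ∈ h '' Icc 0 (dist x w), dist (f s) p ≤ δ) ∧
      ∃ q ∈ g '' Icc 0 (dist z w), dist (f s) q ≤ δ := by
  have hcover : f '' Icc 0 (dist x z) ⊆
      cthickening δ (h '' Icc 0 (dist x w)) ∪ cthickening δ (g '' Icc 0 (dist z w)) := by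
    rintro _ ⟨s, hs, rfl⟩
    rcases hhyp x z w f g h hf hg hh s hs with ⟨t, ht, hd⟩ | ⟨t, ht, hd⟩
    · exact Or.inr (mem_cthickening_of_dist_le _ _ _ _ ⟨t, ht, rfl⟩ hd)
    · exact Or.inl (mem_cthickening_of_dist_le _ _ _ _ ⟨t, ht, rfl⟩ hd)
  have hx : x ∈ f '' Icc 0 (dist x z) ∩ cthickening δ (h '' Icc 0 (dist x w)) :=
    ⟨⟨0, left_mem_Icc.2 dist_nonneg, hf.1⟩,
      self_subset_cthickening _ ⟨0, left_mem_Icc.2 dist_nonneg, hh.1⟩⟩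
  have hz : z ∈ f '' Icc 0 (dist x z) ∩ cthickening δ (g '' Icc 0 (dist z w)) :=
    ⟨⟨dist x z, right_mem_Icc.2 dist_nonneg, hf.2.1⟩,
      self_subset_cthickening _ ⟨0, left_mem_Icc.2 dist_nonneg, hg.1⟩⟩
  obtain ⟨_, ⟨s, hs, rfl⟩, hsh, hsg⟩ :=
    isPreconnected_closed_iff.1 hf.isConnected_image.isPreconnected _ _ isClosed_cthickening
      isClosed_cthickening hcover ⟨x, hx⟩ ⟨z, hz⟩
  rw [hh.isCompact_image.cthickening_eq_biUnion_closedBall hδ] at hsh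
  rw [hg.isCompact_image.cthickening_eq_biUnion_closedBall hδ] at hsg
  simp only [mem_iUnion₂, mem_closedBall, exists_prop] at hsh hsg
  exact ⟨s, hs, hsh, hsg⟩

lemma exists_dist_le_gromov_add (hhyp : RipsHyperbolic S δ) (hδ : 0 ≤ δ)
    (hgeo : GeodesicMetricSpace S) {f : ℝ → S} {x z : S} (hf : IsGeodesicSeg f x z) (w : S) :
    ∃ s ∈ Icc 0 (dist x z), dist w (f s) ≤ gromov x z w + 2 * δ := by
  obtain ⟨g, hg⟩ := hgeo z w
  obtain ⟨h, hh⟩ := hgeo x w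
  obtain ⟨s, hs, ⟨_, ⟨t₁, ht₁, rfl⟩, hd₁⟩, _, ⟨t₂, ht₂, rfl⟩, hd₂⟩ :=
    hhyp.exists_near_both_sides hδ hf hg hh
  refine ⟨s, hs, ?_⟩
  unfold gromov
  linarith [hf.dist_add_dist hs, hh.dist_add_dist ht₁, hg.dist_add_dist ht₂,
    dist_triangle x (h t₁) (f s), dist_triangle w (h t₁) (f s), dist_comm (h t₁) (f s),
    dist_comm (h t₁) w, dist_triangle z (g t₂) (f s), dist_triangle w (g t₂) (f s),
    dist_comm (g t₂) (f s), dist_comm (g t₂) w, dist_comm (f s) z]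

lemma gromovProductHyperbolic (hhyp : RipsHyperbolic S δ) (hδ : 0 ≤ δ)
    (hgeo : GeodesicMetricSpace S) : GromovProductHyperbolic S (3 * δ) := by
  intro w a b c
  obtain ⟨f, hf⟩ := hgeo a c
  obtain ⟨s, hs, hws⟩ := hhyp.exists_dist_le_gromov_add hδ hgeo hf w
  obtain ⟨g, hg⟩ := hgeo c b
  obtain ⟨h, hh⟩ := hgeo a b
  rcases hhyp a c b f g h hf hg hh s hs with ⟨t, ht, hd⟩ | ⟨t, ht, hd⟩
  · linarith [gromov_le_dist_of_dist_add_dist_eq (hg.dist_add_dist ht) w, gromov_comm c b w,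
      min_le_right (gromov a b w) (gromov b c w), dist_triangle w (f s) (g t)]
  · linarith [gromov_le_dist_of_dist_add_dist_eq (hh.dist_add_dist ht) w,
      min_le_left (gromov a b w) (gromov b c w), dist_triangle w (f s) (h t)]

end RipsHyperbolic

namespace GromovProductHyperbolic

variable {S : Type*} [MetricSpace S] {D K L : ℝ}

lemma nonneg (hS : GromovProductHyperbolic S D) (x : S) : 0 ≤ D := by
  simpa [gromov] using hS x x x x

lemma gromov_chain_le (hS : GromovProductHyperbolic S D) {p : ℕ → S}
    (hL : ∀ i, L ≤ dist (p i) (p (i + 1))) (hK : ∀ i, gromov (p i) (p (i + 2)) (p (i + 1)) ≤ K)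
    (hLK : 2 * (K + D) < L) (n : ℕ) : gromov (p 0) (p (n + 1)) (p n) ≤ K + D := by
  induction n with
  | zero =>
    linarith [gromov_self_left (p 0) (p 1), hK 0, gromov_nonneg (p 0) (p 2) (p 1),
      hS.nonneg (p 0)]
  | succ n ih =>
    have hback : gromov (p n) (p 0) (p (n + 1)) =
        dist (p n) (p (n + 1)) - gromov (p 0) (p (n + 1)) (p n) := by
      unfold gromov; rw [dist_comm (p n) (p 0), dist_comm (p (n + 1)) (p n)]; ring
    have hmin :
        min (gromov (p n) (p 0) (p (n + 1))) (gromov (p 0) (p (n + 2)) (p (n + 1))) ≤ K + D := by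
      linarith [hS (p (n + 1)) (p n) (p 0) (p (n + 2)), hK n]
    exact (min_le_iff.1 hmin).resolve_left (not_le.2 (by linarith [hL n]))

lemma mul_le_dist_chain (hS : GromovProductHyperbolic S D) {p : ℕ → S}
    (hL : ∀ i, L ≤ dist (p i) (p (i + 1))) (hK : ∀ i, gromov (p i) (p (i + 2)) (p (i + 1)) ≤ K)
    (hLK : 2 * (K + D) < L) (n : ℕ) : n * (L - 2 * (K + D)) ≤ dist (p 0) (p n) := by
  induction n with
  | zero => simp
  | succ n ih =>
    push_cast
    linarith [dist_eq_dist_add_dist_sub_gromov (p 0) (p n) (p (n + 1)), hL n,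
      hS.gromov_chain_le hL hK hLK n]

variable {G : Type*} [Group G] [MulAction G S] [IsIsometricSMul G S]

lemma mul_le_dist_pow_smul (hS : GromovProductHyperbolic S D) (f : G) (x : S)
    (hf : 2 * (gromov (f⁻¹ • x) (f • x) x + D) < dist x (f • x)) (n : ℕ) :
    n * (dist x (f • x) - 2 * (gromov (f⁻¹ • x) (f • x) x + D)) ≤ dist x (f ^ n • x) := by
  have hstep (i : ℕ) : dist (f ^ i • x) (f ^ (i + 1) • x) = dist x (f • x) := by
    rw [pow_succ, mul_smul, dist_smul]
  have hgromov (i : ℕ) :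
      gromov (f ^ i • x) (f ^ (i + 2) • x) (f ^ (i + 1) • x) = gromov (f⁻¹ • x) (f • x) x := by
    have hprev : f ^ i • x = f ^ (i + 1) • f⁻¹ • x := by
      rw [smul_smul, pow_succ, mul_inv_cancel_right]
    have hnext : f ^ (i + 2) • x = f ^ (i + 1) • f • x := by rw [smul_smul, ← pow_succ]
    rw [hprev, hnext, gromov_smul]
  simpa using hS.mul_le_dist_chain (p := fun n => f ^ n • x) (fun i => (hstep i).ge)
    (fun i => (hgromov i).le) hf n

lemma gromov_inv_smul_mul_smul_le (hS : GromovProductHyperbolic S D) {g h : G} {x y : S}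
    {C : ℝ} (hgx : dist x (g • x) ≤ C) (hhy : dist y (h • y) ≤ C)
    (hhx : dist x y + 2 * C + 6 * D + 1 ≤ dist x (h • x))
    (hgy : dist x y + 2 * C + 6 * D + 1 ≤ dist y (g • y)) :
    gromov ((g * h)⁻¹ • x) ((g * h) • x) x ≤ (dist x y + C - 2 * D - 1) / 2 := by
  have hD := hS.nonneg x
  have hC : 0 ≤ C := dist_nonneg.trans hgx
  have hyg : gromov y (g • y) x ≤ (dist x y - C - 6 * D - 1) / 2 := by
    unfold gromov
    linarith [dist_triangle (g • y) (g • x) x, dist_smul g y x, dist_comm (g • x) x,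
      dist_comm y x]
  have hyh : (dist x y + C + 6 * D + 1) / 2 ≤ gromov y (h⁻¹ • x) x := by
    have hx : dist (h⁻¹ • x) x = dist x (h • x) := by
      rw [← dist_smul h, smul_inv_smul, dist_comm]
    have hy : dist y (h⁻¹ • x) = dist (h • y) x := by rw [← dist_smul h, smul_inv_smul]
    unfold gromov
    linarith [dist_triangle (h • y) y x, dist_comm (h • y) y, dist_comm y x]
  have hghx : (dist x y - C + 6 * D + 1) / 2 ≤ gromov (g • h • x) (g • y) x := by
    unfold gromov
    linarith [dist_triangle (g • h • x) x (g • x), dist_smul g (h • x) x, dist_comm (h • x) x,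
      dist_triangle (g • y) x (g • x), dist_smul g y x, dist_comm y x, dist_smul g (h • x) y,
      dist_triangle (h • x) (h • y) y, dist_smul h x y, dist_comm (h • y) y]
  have hmid : gromov (h⁻¹ • x) (g • y) x ≤ (dist x y - C - 4 * D - 1) / 2 := by
    have hmin : min (gromov y (h⁻¹ • x) x) (gromov (h⁻¹ • x) (g • y) x) ≤
        (dist x y - C - 4 * D - 1) / 2 := by
      linarith [hS x y (h⁻¹ • x) (g • y)]
    exact (min_le_iff.1 hmin).resolve_left (not_le.2 (by linarith))
  have hnear : gromov (h⁻¹ • x) (g • h • x) x ≤ (dist x y - C - 2 * D - 1) / 2 := by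
    have hmin : min (gromov (h⁻¹ • x) (g • h • x) x) (gromov (g • h • x) (g • y) x) ≤
        (dist x y - C - 2 * D - 1) / 2 := by
      linarith [hS x (h⁻¹ • x) (g • h • x) (g • y)]
    exact (min_le_iff.1 hmin).resolve_right (not_le.2 (by linarith))
  have hshift : dist (h⁻¹ • g⁻¹ • x) (h⁻¹ • x) = dist x (g • x) := by
    rw [dist_smul, ← dist_smul g, smul_inv_smul, dist_comm]
  rw [mul_inv_rev, mul_smul, mul_smul]
  unfold gromov at hnear ⊢
  linarith [dist_triangle (h⁻¹ • g⁻¹ • x) (h⁻¹ • x) x,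
    dist_triangle (h⁻¹ • x) (h⁻¹ • g⁻¹ • x) (g • h • x), dist_comm (h⁻¹ • x) (h⁻¹ • g⁻¹ • x)]

end GromovProductHyperbolic

theorem stmt_4_general {G S : Type*} [Group G] [MetricSpace S] [MulAction G S]
    [IsIsometricSMul G S] (δ : ℝ) (hδ : 0 ≤ δ)
    (hgeo : GeodesicMetricSpace S) (hhyp : RipsHyperbolic S δ)
    (g h : G) (x y : S) (C : ℝ)
    (hmax : max (dist x (g • x)) (dist y (h • y)) ≤ C)
    (hmin : min (dist x (h • x)) (dist y (g • y)) ≥ dist x y + 2 * C + 18 * δ + 1) :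
    ∀ n : ℕ, dist x (((g * h) ^ n) • x) ≥ (n : ℝ) := by
  intro n
  have hS := hhyp.gromovProductHyperbolic hδ hgeo
  obtain ⟨hgx, hhy⟩ := max_le_iff.1 hmax
  obtain ⟨hhx, hgy⟩ := le_min_iff.1 hmin
  have hK := hS.gromov_inv_smul_mul_smul_le hgx hhy (by linarith) (by linarith)
  have hL : dist x (h • x) - dist x (g • x) ≤ dist x ((g * h) • x) := by
    rw [mul_smul]
    linarith [dist_triangle (g • x) x (g • h • x), dist_smul g x (h • x), dist_comm x (g • x)]
  calc (n : ℝ)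
      ≤ n * (dist x ((g * h) • x) - 2 * (gromov ((g * h)⁻¹ • x) ((g * h) • x) x + 3 * δ)) :=
        le_mul_of_one_le_right n.cast_nonneg (by linarith)
    _ ≤ dist x ((g * h) ^ n • x) := hS.mul_le_dist_pow_smul _ x (by linarith) n

theorem stmt_4 {G S : Type*} [Group G] [MetricSpace S] [MulAction G S]
    [IsIsometricSMul G S] (δ : ℝ) (hδ : 0 ≤ δ)
    (hgeo : GeodesicMetricSpace S) (hhyp : RipsHyperbolic S δ)
    (g h : G) (x y : S) (C : ℝ) (hC : 0 < C)
    (hmax : max (dist x (g • x)) (dist y (h • y)) ≤ C)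
    (hmin : min (dist x (h • x)) (dist y (g • y)) ≥ dist x y + 2 * C + 18 * δ + 1) :
    ∀ n : ℕ, dist x (((g * h) ^ n) • x) ≥ (n : ℝ) :=
  stmt_4_general δ hδ hgeo hhyp g h x y C hmax hmin
end

section
/- Let G be a group acting acylindrically by isometries on a δ-hyperbolic geodesic metric space (S,d). Then for any ε > 0 there exist R, N > 0 such that for any x, y ∈ S with d(x,y) ≥ R, the set of elements g ∈ G satisfying d(x,gx) ≤ ε and d(y,gy) ≤ d(x,y) + ε has cardinality at most N. -/
open Bornology

/-!
Fix `t` larger than the acylindricity constant `R₀` for `ε + 4δ` and let `m` be the point of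
`[x, y]` at distance `t` from `x`. If `g` moves `x` by at most `ε` and `y` by at most `d(x, y) + ε`,
then `g • m`, the point of `g • [x, y]` at distance `t` from `g • x`, is `δ`-close to `[g • y, x]`
(the Gromov product `(g • y, x)_{g • x}` is at most `ε`), and that point is in turn `δ`-close to
`[x, y]` (the Gromov product `(x, y)_{g • y}` is about `d(x, y) / 2`, far beyond `t` once `d(x, y)`
is large). Hence `g` moves both `x` and `m` by at most `ε + 4δ`, and acylindricity bounds the
number of such `g`.
-/

open Set

section Geodesics

variable {S : Type*} [MetricSpace S]

namespace IsGeodesicSeg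

variable {f : ℝ → S} {x y : S} {s : ℝ}

theorem dist_left_s5 (hf : IsGeodesicSeg f x y) (hs : s ∈ Icc 0 (dist x y)) :
    dist x (f s) = s := by
  obtain ⟨hf0, -, hfdist⟩ := hf
  rw [← hf0, hfdist 0 ⟨le_rfl, dist_nonneg⟩ s hs, zero_sub, abs_neg, abs_of_nonneg hs.1]

theorem dist_right (hf : IsGeodesicSeg f x y) (hs : s ∈ Icc 0 (dist x y)) :
    dist (f s) y = dist x y - s := by
  obtain ⟨-, hfd, hfdist⟩ := hf
  rw [← hfd, hfdist s hs _ ⟨dist_nonneg, le_rfl⟩, hfd, abs_of_nonpos (by linarith [hs.2]), neg_sub]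

theorem smul {G : Type*} [Group G] [MulAction G S] [IsIsometricSMul G S]
    (hf : IsGeodesicSeg f x y) (g : G) :
    IsGeodesicSeg (fun s => g • f s) (g • x) (g • y) := by
  obtain ⟨hf0, hfd, hfdist⟩ := hf
  refine ⟨by simp only [hf0], by simp only [dist_smul, hfd], fun s hs u hu => ?_⟩
  rw [dist_smul] at hs hu ⊢
  exact hfdist s hs u hu

end IsGeodesicSeg

theorem gromov_le_dist_right (x y t : S) : gromov x y t ≤ dist y t := by
  unfold gromov
  linarith [dist_triangle x y t]

namespace RipsHyperbolic

variable {δ : ℝ}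

theorem exists_dist_le_of_gromov_lt (hhyp : RipsHyperbolic S δ) {a b c : S} {f g h : ℝ → S}
    (hf : IsGeodesicSeg f a b) (hg : IsGeodesicSeg g b c) (hh : IsGeodesicSeg h a c)
    {s : ℝ} (hs : s ∈ Icc 0 (dist a b)) (hsc : gromov b c a + δ < s) :
    ∃ u ∈ Icc 0 (dist b c), dist (f s) (g u) ≤ δ := by
  refine (hhyp a b c f g h hf hg hh s hs).resolve_right ?_
  rintro ⟨u, hu, hclose⟩
  have hau := dist_triangle a (h u) (f s)
  have hbc := dist_triangle4 b (f s) (h u) c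
  rw [hf.dist_left_s5 hs, hh.dist_left_s5 hu, dist_comm (h u)] at hau
  rw [dist_comm b (f s), hf.dist_right hs, hh.dist_right hu] at hbc
  unfold gromov at hsc
  linarith [dist_comm a b, dist_comm a c, dist_comm (h u) (f s)]

theorem dist_apply_le_of_isGeodesicSeg (hgeo : GeodesicMetricSpace S) (hhyp : RipsHyperbolic S δ)
    (hδ : 0 ≤ δ) {ε t : ℝ} {x y x' y' : S} {f f' : ℝ → S}
    (hf : IsGeodesicSeg f x y) (hf' : IsGeodesicSeg f' x' y') (hlen : dist x' y' = dist x y)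
    (hx : dist x x' ≤ ε) (hy : dist y y' ≤ dist x y + ε) (hεt : ε + δ < t)
    (hd : 2 * t + 4 * ε + 4 * δ < dist x y) :
    dist (f t) (f' t) ≤ ε + 4 * δ := by
  obtain ⟨β, hβ⟩ := hgeo y' x
  obtain ⟨ζ, hζ⟩ := hgeo x' x
  obtain ⟨θ, hθ⟩ := hgeo y' y
  have hε : 0 ≤ ε := dist_nonneg.trans hx
  have ht : t ∈ Icc 0 (dist x y) := ⟨by linarith, by linarith⟩
  have ht' : t ∈ Icc 0 (dist x' y') := hlen ▸ ht
  have hy'x : dist x y - ε ≤ dist y' x := by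
    linarith [dist_triangle x' x y', dist_comm x x', dist_comm x y']
  -- `f' t` is close to a point `p = β u` of `[y', x]`, and `d(x, p)` is about `t`
  obtain ⟨u, hu, hpu⟩ := hhyp.exists_dist_le_of_gromov_lt hf' hβ hζ ht' <| by
    linarith [gromov_le_dist_right y' x x', dist_comm x x']
  have hxf't : |dist x (f' t) - t| ≤ ε := by
    rw [abs_le]
    constructor <;>
      linarith [hf'.dist_left_s5 ht', dist_triangle x' x (f' t), dist_triangle x x' (f' t),
        dist_comm x x']
  have hxp : |dist (β u) x - t| ≤ ε + δ := by
    rw [abs_le] at hxf't ⊢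
    constructor <;>
      linarith [dist_triangle x (f' t) (β u), dist_triangle x (β u) (f' t), dist_comm x (β u),
        dist_comm (f' t) (β u)]
  -- `p` is in turn close to a point `q = f v` of `[x, y]`, and `v = d(x, q)` is about `t`
  obtain ⟨v, hv, hqv⟩ := hhyp.exists_dist_le_of_gromov_lt hβ hf hθ hu <| by
    rw [abs_le, hβ.dist_right hu] at hxp
    unfold gromov
    linarith [dist_comm x y', dist_comm y y']
  have hvt : |v - t| ≤ ε + 2 * δ := by
    rw [abs_le] at hxp ⊢
    constructor <;>
      linarith [hf.dist_left_s5 hv, dist_triangle x (f v) (β u), dist_triangle x (β u) (f v),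
        dist_comm x (β u), dist_comm (f v) (β u)]
  calc dist (f t) (f' t) ≤ dist (f t) (f v) + dist (f v) (β u) + dist (β u) (f' t) :=
        dist_triangle4 _ _ _ _
    _ ≤ (ε + 2 * δ) + δ + δ := by
        gcongr
        · rw [hf.2.2 t ht v hv, abs_sub_comm]
          exact hvt
        · rwa [dist_comm]
        · rwa [dist_comm]
    _ = ε + 4 * δ := by ring

end RipsHyperbolic

end Geodesics

theorem stmt_5 {G S : Type*} [Group G] [MetricSpace S] [MulAction G S]
    [IsIsometricSMul G S] (δ : ℝ) (hδ : 0 ≤ δ)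
    (hgeo : GeodesicMetricSpace S) (hhyp : RipsHyperbolic S δ)
    (hacyl : AcylindricalAction G S) :
    ∀ ε : ℝ, 0 < ε → ∃ R : ℝ, ∃ N : ℕ, 0 < R ∧
      ∀ x y : S, dist x y ≥ R →
        {g : G | dist x (g • x) ≤ ε ∧ dist y (g • y) ≤ dist x y + ε}.Finite ∧
        {g : G | dist x (g • x) ≤ ε ∧ dist y (g • y) ≤ dist x y + ε}.ncard ≤ N := by
  intro ε hε
  obtain ⟨R₀, N, -, hacylR⟩ := hacyl (ε + 4 * δ) (by linarith)
  set t := max R₀ (ε + δ + 1)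
  have hεt : ε + δ + 1 ≤ t := le_max_right _ _
  refine ⟨2 * t + 4 * ε + 4 * δ + 1, N, by linarith, ?_⟩
  intro x y hxy
  obtain ⟨f, hf⟩ := hgeo x y
  have ht : t ∈ Icc 0 (dist x y) := ⟨by linarith, by linarith⟩
  have hsub : {g : G | dist x (g • x) ≤ ε ∧ dist y (g • y) ≤ dist x y + ε} ⊆
      {g : G | dist x (g • x) ≤ ε + 4 * δ ∧ dist (f t) (g • f t) ≤ ε + 4 * δ} :=
    fun g ⟨hgx, hgy⟩ => ⟨by linarith,
      hhyp.dist_apply_le_of_isGeodesicSeg hgeo hδ hf (hf.smul g) (dist_smul g x y) hgx hgy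
        (by linarith) (by linarith)⟩
  obtain ⟨hfin, hcard⟩ := hacylR x (f t) (by rw [hf.dist_left_s5 ht]; exact le_max_left _ _)
  exact ⟨hfin.subset hsub, (ncard_le_ncard hsub hfin).trans hcard⟩
end
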